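/- Let $(\mathcal{X}, d)$ be a metric space, $T > 0$, and for each $k \ge 0$ let $X^k \in C([0,T]; \mathcal{X})$ with $X^k(0) = \mathrm{id}$ for all $k$. Let $\mu: [0,\infty) \to [0,\infty)$ be bounded, continuous, increasing with $\mu(0) = 0$ and $\int_0^a dr/\mu(r) = \infty$ for some $a > 0$. Suppose that for some $C > 0$ and all $n, k \ge 1$, $t \in [0,T]$: $d(X^{n+k}(t), X^k(t)) \le C\int_0^t \big[\mu(d(X^{n+k}(t'), X^k(t'))) + \mu(d(X^{n+k-1}(t'), X^{k-1}(t')))\big]\,dt'$, and that $\rho^k(t) := \sup_n \sup_{0 \le t' \le t} d(X^{n+k}(t'), X^k(t'))$ is finite for each $k$. Then $\limsup_{k\to\infty} \rho^k(t) = 0$ for all $t \in [0,T]$, i.e., $(X^k)$ is uniformly Cauchy on $[0,T]$. -/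

import Mathlib

open MeasureTheory Set Filter Topology
open scoped ENNReal

private lemma lint_Ioc_le (μ : ℝ → ℝ) (hμ_mono : Monotone μ) {x y : ℝ}
    (hx : 0 < μ x) :
    ∫⁻ r in Ioc x y, ENNReal.ofReal (1 / μ r) ≤ ENNReal.ofReal ((y - x) * (1 / μ x)) := by
  have h1 : ∫⁻ r in Ioc x y, ENNReal.ofReal (1 / μ r)
      ≤ ∫⁻ _ in Ioc x y, ENNReal.ofReal (1 / μ x) := by
    refine setLIntegral_mono measurable_const fun r hr => ?_
    exact ENNReal.ofReal_le_ofReal (one_div_le_one_div_of_le hx (hμ_mono hr.1.le))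
  refine h1.trans ?_
  rw [setLIntegral_const, Real.volume_Ioc, ← ENNReal.ofReal_mul (by positivity)]
  rw [mul_comm]

private lemma osgood_core (μ : ℝ → ℝ) (hμ_nonneg : ∀ r, 0 ≤ μ r) (hμ_mono : Monotone μ)
    (hμ_osgood : ∃ a > 0, ∫⁻ r in Ioc (0:ℝ) a, ENNReal.ofReal (1 / μ r) = ⊤)
    (K T : ℝ) (hK : 0 < K) (ψ : ℝ → ℝ) (hψc : Continuous ψ)
    (hψ0 : ψ 0 = 0) (hψ_nonneg : ∀ t, 0 ≤ t → 0 ≤ ψ t)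
    (hdiff : ∀ s t, 0 ≤ s → s ≤ t → t ≤ T → ψ t - ψ s ≤ K * (t - s) * μ (ψ t)) :
    ∀ t, 0 ≤ t → t ≤ T → ψ t ≤ 0 := by
  by_contra hcon
  push_neg at hcon
  obtain ⟨t0, ht00, ht0T, ht0⟩ := hcon
  set Z : Set ℝ := Icc 0 t0 ∩ ψ ⁻¹' (Iic 0) with hZdef
  have hZcomp : IsCompact Z := isCompact_Icc.inter_right (isClosed_Iic.preimage hψc)
  have hZne : Z.Nonempty := ⟨0, ⟨le_refl 0, ht00⟩, by simpa [hψ0]⟩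
  set t1 := sSup Z with ht1def
  have ht1Z : t1 ∈ Z := hZcomp.sSup_mem hZne
  have ht10 : 0 ≤ t1 := ht1Z.1.1
  have ht1t0 : t1 ≤ t0 := ht1Z.1.2
  have hψt1 : ψ t1 = 0 := le_antisymm ht1Z.2 (hψ_nonneg t1 ht10)
  have ht1lt : t1 < t0 := lt_of_le_of_ne ht1t0 (fun h => by rw [h] at hψt1; linarith)
  have hposon : ∀ t, t1 < t → t ≤ t0 → 0 < ψ t := by
    intro t h1 h2
    by_contra h
    push_neg at h
    have : t ∈ Z := ⟨⟨le_trans ht10 h1.le, h2⟩, h⟩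
    exact absurd (le_csSup hZcomp.bddAbove this) (not_le.mpr h1)
  by_cases hc : ∃ c, 0 < c ∧ μ c = 0
  · obtain ⟨c, hc0, hμc⟩ := hc
    obtain ⟨δ, hδ0, hδ⟩ := Metric.continuousAt_iff.mp (hψc.continuousAt (x := t1)) c hc0
    set s := min t0 (t1 + δ / 2) with hs
    have hts : t1 < s := lt_min ht1lt (by linarith)
    have hst0 : s ≤ t0 := min_le_left _ _
    have hsd : dist s t1 < δ := by
      rw [Real.dist_eq, abs_of_nonneg (by linarith)]
      have : s ≤ t1 + δ / 2 := min_le_right _ _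
      linarith
    have hψs : ψ s ≤ c := by
      have := hδ hsd
      rw [Real.dist_eq, hψt1, sub_zero] at this
      exact (abs_lt.mp this).2.le
    have := hdiff t1 s ht10 hts.le (le_trans hst0 ht0T)
    rw [hψt1, sub_zero] at this
    have hμs : μ (ψ s) ≤ 0 := by
      rw [← hμc]; exact hμ_mono hψs
    have hr : K * (s - t1) * μ (ψ s) ≤ 0 :=
      mul_nonpos_of_nonneg_of_nonpos (by nlinarith) hμs
    have : ψ s ≤ 0 := le_trans this hr
    exact absurd this (not_le.mpr (hposon s hts hst0))
  · push_neg at hc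
    have hpos : ∀ c, 0 < c → 0 < μ c := fun c h =>
      lt_of_le_of_ne (hμ_nonneg c) (Ne.symm (hc c h))
    set v := ψ t0 with hv
    have hv0 : 0 < v := ht0
    -- the sequence of times
    set A : ℕ → Set ℝ := fun j => Icc t1 t0 ∩ ψ ⁻¹' (Ici (v / 2 ^ j)) with hAdef
    have hAcomp : ∀ j, IsCompact (A j) := fun j =>
      isCompact_Icc.inter_right (isClosed_Ici.preimage hψc)
    have hAne : ∀ j, (A j).Nonempty := fun j =>
      ⟨t0, ⟨ht1t0, le_refl _⟩, by
        simp only [mem_preimage, mem_Ici, ← hv]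
        exact div_le_self hv0.le (one_le_pow₀ one_le_two)⟩
    set S : ℕ → ℝ := fun j => sInf (A j) with hSdef
    have hSmem : ∀ j, S j ∈ A j := fun j => (hAcomp j).sInf_mem (hAne j)
    have hS1 : ∀ j, t1 ≤ S j := fun j => (hSmem j).1.1
    have hS2 : ∀ j, S j ≤ t0 := fun j => (hSmem j).1.2
    have hSv : ∀ j, v / 2 ^ j ≤ ψ (S j) := fun j => (hSmem j).2
    have hSgt : ∀ j, t1 < S j := by
      intro j
      rcases eq_or_lt_of_le (hS1 j) with h | h
      · exfalso
        have h2 := hSv j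
        rw [← h, hψt1] at h2
        have h3 : (0:ℝ) < v / 2 ^ j := by positivity
        linarith
      · exact h
    have hψS : ∀ j, ψ (S j) = v / 2 ^ j := by
      intro j
      refine le_antisymm ?_ (hSv j)
      haveI hne : (𝓝[Iio (S j)] (S j)).NeBot := nhdsLT_neBot (S j)
      refine le_of_tendsto (hψc.continuousAt.tendsto.mono_left (nhdsWithin_le_nhds (s := Iio (S j)))) ?_
      filter_upwards [Ioo_mem_nhdsLT (hSgt j)] with t ht
      by_contra h
      push_neg at h
      have : t ∈ A j := ⟨⟨ht.1.le, le_trans ht.2.le (hS2 j)⟩, h.le⟩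
      exact absurd (csInf_le (hAcomp j).bddBelow this) (not_le.mpr ht.2)
    have hSanti : ∀ j, S (j + 1) ≤ S j := by
      intro j
      refine csInf_le_csInf (hAcomp (j+1)).bddBelow (hAne j) ?_
      intro t ht
      refine ⟨ht.1, ?_⟩
      have : v / 2 ^ (j + 1) ≤ v / 2 ^ j := by
        apply div_le_div_of_nonneg_left hv0.le (by positivity)
        exact pow_le_pow_right₀ one_le_two (Nat.le_succ j)
      exact le_trans this ht.2
    have hgap : ∀ j, v / 2 ^ (j + 1) ≤ K * (S j - S (j + 1)) * μ (v / 2 ^ j) := by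
      intro j
      have := hdiff (S (j + 1)) (S j) (le_trans ht10 (hS1 _)) (hSanti j)
        (le_trans (hS2 j) ht0T)
      rw [hψS j, hψS (j + 1)] at this
      have heq : v / 2 ^ j - v / 2 ^ (j + 1) = v / 2 ^ (j + 1) := by
        field_simp
        ring
      linarith [heq ▸ this]
    have hSle : ∀ i j : ℕ, i ≤ j → S j ≤ S i := fun i j h =>
      (antitone_nat_of_succ_le hSanti) h
    have hvle : ∀ i j : ℕ, i ≤ j → v / 2 ^ j ≤ v / 2 ^ i := by
      intro i j h
      apply div_le_div_of_nonneg_left hv0.le (by positivity)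
      exact pow_le_pow_right₀ one_le_two h
    have hμmeas : Measurable fun r => ENNReal.ofReal (1 / μ r) :=
      ENNReal.measurable_ofReal.comp (measurable_const.div hμ_mono.measurable)
    have hIbound : ∀ j : ℕ, ∫⁻ r in Ioc (v / 2 ^ (j + 1)) (v / 2 ^ j), ENNReal.ofReal (1 / μ r)
        ≤ ENNReal.ofReal (2 * K * (S (j + 1) - S (j + 2))) := by
      intro j
      have hx : (0:ℝ) < v / 2 ^ (j + 1) := by positivity
      refine (lint_Ioc_le μ hμ_mono (hpos _ hx)).trans (ENNReal.ofReal_le_ofReal ?_)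
      have hμp := hpos _ hx
      have hg := hgap (j + 1)
      have heq : v / 2 ^ j - v / 2 ^ (j + 1) = v / 2 ^ (j + 1) := by field_simp; ring
      rw [heq, mul_one_div, div_le_iff₀ hμp]
      have h2 : v / 2 ^ (j + 1) = 2 * (v / 2 ^ (j + 2)) := by field_simp; ring
      have hg2 : v / 2 ^ (j + 2) ≤ K * (S (j + 1) - S (j + 2)) * μ (v / 2 ^ (j + 1)) := by
        have := hgap (j + 1)
        simp only [add_assoc] at this ⊢
        norm_num at this ⊢
        convert this using 2
      linarith
    have hpartial : ∀ N : ℕ, ∫⁻ r in Ioc (v / 2 ^ (N + 1)) v, ENNReal.ofReal (1 / μ r)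
        ≤ ENNReal.ofReal (2 * K * (S 1 - S (N + 2))) := by
      intro N
      induction N with
      | zero =>
        have h0 := hIbound 0
        rw [pow_zero, div_one] at h0
        exact h0
      | succ N ih =>
        have hle1 : v / 2 ^ (N + 2) ≤ v / 2 ^ (N + 1) := hvle _ _ (by omega)
        have hle2 : v / 2 ^ (N + 1) ≤ v := by
          have := hvle 0 (N + 1) (by omega)
          rwa [pow_zero, div_one] at this
        have hsplit : Ioc (v / 2 ^ (N + 1 + 1)) v
            = Ioc (v / 2 ^ (N + 2)) (v / 2 ^ (N + 1)) ∪ Ioc (v / 2 ^ (N + 1)) v := by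
          rw [Ioc_union_Ioc_eq_Ioc hle1 hle2]
        rw [hsplit, lintegral_union measurableSet_Ioc (Ioc_disjoint_Ioc_of_le le_rfl)]
        refine (add_le_add (hIbound (N + 1)) ih).trans ?_
        rw [← ENNReal.ofReal_add
          (by nlinarith [hSle (N + 2) (N + 3) (by omega), hK.le])
          (by nlinarith [hSle 1 (N + 2) (by omega), hK.le])]
        exact ENNReal.ofReal_le_ofReal (by ring_nf; linarith)
    have hTbound : ∀ N : ℕ, ∫⁻ r in Ioc (v / 2 ^ (N + 1)) v, ENNReal.ofReal (1 / μ r)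
        ≤ ENNReal.ofReal (2 * K * T) := by
      intro N
      refine (hpartial N).trans (ENNReal.ofReal_le_ofReal ?_)
      nlinarith [hK.le, hS2 1, hS1 (N + 2), ht10, ht0T]
    have hall : ∫⁻ r in Ioc (0:ℝ) v, ENNReal.ofReal (1 / μ r) ≤ ENNReal.ofReal (2 * K * T) := by
      set g := fun r => ENNReal.ofReal (1 / μ r) with hgdef
      set f := fun N => (Ioc (v / 2 ^ (N + 1)) v).indicator g with hfdef
      have hfmeas : ∀ N, Measurable (f N) := fun N => hμmeas.indicator measurableSet_Ioc
      have hfmono : Monotone f := by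
        intro N M h
        exact indicator_le_indicator_of_subset
          (Ioc_subset_Ioc_left (hvle _ _ (by omega))) (fun _ => zero_le)
      have hfsup : ∀ r, (⨆ N, f N r) = (Ioc (0:ℝ) v).indicator g r := by
        intro r
        by_cases hr : r ∈ Ioc (0:ℝ) v
        · rw [indicator_of_mem hr]
          have hex : ∃ N : ℕ, v / 2 ^ (N + 1) < r := by
            obtain ⟨n, hn⟩ := pow_unbounded_of_one_lt (v / r) (one_lt_two (α := ℝ))
            refine ⟨n, ?_⟩
            rw [div_lt_iff₀ (by positivity)]
            rw [div_lt_iff₀ hr.1] at hn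
            calc v < 2 ^ n * r := hn
              _ ≤ r * 2 ^ (n + 1) := by
                  have h2n : (2:ℝ) ^ n ≤ 2 ^ (n + 1) := pow_le_pow_right₀ one_le_two (by omega)
                  nlinarith [hr.1]

          obtain ⟨N, hN⟩ := hex
          refine le_antisymm (iSup_le fun M => indicator_le_self _ _ r) ?_
          refine le_trans (le_of_eq ?_) (le_iSup _ N)
          show g r = (Ioc (v / 2 ^ (N + 1)) v).indicator g r
          rw [Set.indicator_of_mem (show r ∈ Ioc (v / 2 ^ (N + 1)) v from ⟨hN, hr.2⟩)]
        · rw [indicator_of_notMem hr]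
          refine le_antisymm (iSup_le fun M => ?_) zero_le
          by_cases hm : r ∈ Ioc (v / 2 ^ (M + 1)) v
          · exact absurd (⟨lt_of_le_of_lt (by positivity) hm.1, hm.2⟩ : r ∈ Ioc (0:ℝ) v) hr
          · show (Ioc (v / 2 ^ (M + 1)) v).indicator g r ≤ 0
            rw [Set.indicator_of_notMem hm]
      calc ∫⁻ r in Ioc (0:ℝ) v, g r = ∫⁻ r, (Ioc (0:ℝ) v).indicator g r :=
            (lintegral_indicator measurableSet_Ioc g).symm
        _ = ∫⁻ r, ⨆ N, f N r := lintegral_congr fun r => (hfsup r).symm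
        _ = ⨆ N, ∫⁻ r, f N r := lintegral_iSup hfmeas hfmono
        _ ≤ ENNReal.ofReal (2 * K * T) := by
            refine iSup_le fun N => ?_
            simp only [hfdef]
            rw [lintegral_indicator measurableSet_Ioc g]
            exact hTbound N
    obtain ⟨a, ha0, hInt⟩ := hμ_osgood
    rcases le_or_gt a v with h | h
    · have hle : (⊤:ℝ≥0∞) ≤ ENNReal.ofReal (2 * K * T) := by
        rw [← hInt]
        exact (lintegral_mono_set (Ioc_subset_Ioc_right h)).trans hall
      exact ENNReal.ofReal_ne_top (top_le_iff.mp hle)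
    · have hsplit : Ioc (0:ℝ) a = Ioc 0 v ∪ Ioc v a := (Ioc_union_Ioc_eq_Ioc hv0.le h.le).symm
      rw [hsplit, lintegral_union measurableSet_Ioc (Ioc_disjoint_Ioc_of_le le_rfl)] at hInt
      have h2 := lint_Ioc_le μ hμ_mono (y := a) (hpos v hv0)
      have hfin : (⊤:ℝ≥0∞) ≤ ENNReal.ofReal (2 * K * T) + ENNReal.ofReal ((a - v) * (1 / μ v)) := by
        rw [← hInt]
        exact add_le_add hall h2
      exact (ENNReal.add_ne_top.mpr ⟨ENNReal.ofReal_ne_top, ENNReal.ofReal_ne_top⟩)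
        (top_le_iff.mp hfin)

private lemma intInt_of_bdd {f : ℝ → ℝ} (hf : Measurable f) {Bd : ℝ}
    (hB : ∀ x, |f x| ≤ Bd) (a b : ℝ) :
    IntervalIntegrable f volume a b := by
  rw [intervalIntegrable_iff]
  refine Integrable.mono' (g := fun _ => Bd) ?_ hf.aestronglyMeasurable.restrict
    (Filter.Eventually.of_forall hB)
  exact integrableOn_const measure_Ioc_lt_top.ne

/-- The iteration convergence argument of the Osgood–Picard lemma: if the Picard iterates
`X^k : [0,T] → 𝓧` all start at `id𝓧`, the quantities
`ρ^k(t) = sup_n sup_{t' ≤ t} d(X^{n+k}(t'), X^k(t'))` are finite, `μ` is a bounded continuous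
increasing Osgood modulus, and for all `n, k ≥ 1`
`d(X^{n+k}(t), X^k(t)) ≤ C ∫_0^t [μ(d(X^{n+k}, X^k)) + μ(d(X^{n+k-1}, X^{k-1}))]`,
then the sequence `(X^k)` is uniformly Cauchy on `[0,T]`. -/
theorem picard_iterates_uniformly_cauchy
    {𝓧 : Type*} [MetricSpace 𝓧] (id𝓧 : 𝓧) (T : ℝ) (hT : 0 < T)
    (X : ℕ → ℝ → 𝓧)
    (hX_cont : ∀ k, ContinuousOn (X k) (Icc 0 T))
    (hX_init : ∀ k, X k 0 = id𝓧)
    (μ : ℝ → ℝ)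
    (hμ_nonneg : ∀ r, 0 ≤ μ r)
    (hμ_bdd : ∃ B, ∀ r, μ r ≤ B)
    (hμ_cont : Continuous μ)
    (hμ_mono : Monotone μ)
    (hμ0 : μ 0 = 0)
    (hμ_osgood : ∃ a > 0, ∫⁻ r in Ioc (0:ℝ) a, ENNReal.ofReal (1 / μ r) = ⊤)
    (C : ℝ) (hC : 0 < C)
    (hineq : ∀ n ≥ 1, ∀ k ≥ 1, ∀ t ∈ Icc 0 T,
      dist (X (n + k) t) (X k t) ≤
        C * ∫ t' in (0:ℝ)..t,
          (μ (dist (X (n + k) t') (X k t')) + μ (dist (X (n + k - 1) t') (X (k - 1) t'))))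
    (hfin : ∀ k, ∃ B, ∀ n, ∀ t ∈ Icc 0 T, dist (X (n + k) t) (X k t) ≤ B) :
    ∀ ε > 0, ∃ N, ∀ k ≥ N, ∀ n, ∀ t ∈ Icc 0 T, dist (X (n + k) t) (X k t) < ε := by
  obtain ⟨B, hB⟩ := hμ_bdd
  have hB0 : 0 ≤ B := (hμ_nonneg 0).trans (hB 0)
  set Sset : ℕ → ℝ → Set ℝ := fun k t =>
    insert 0 {d | ∃ n : ℕ, ∃ t' : ℝ, 0 ≤ t' ∧ t' ≤ min t T ∧ d = dist (X (n + k) t') (X k t')}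
    with hSsetdef
  set ρk : ℕ → ℝ → ℝ := fun k t => sSup (Sset k t) with hρkdef
  have hbddA : ∀ k t, BddAbove (Sset k t) := by
    intro k t
    obtain ⟨Bk, hBk⟩ := hfin k
    refine ⟨max Bk 0, ?_⟩
    intro d hd
    rcases mem_insert_iff.mp hd with rfl | ⟨n, t', h0, hmin, rfl⟩
    · exact le_max_right _ _
    · exact le_max_of_le_left (hBk n t' ⟨h0, le_trans hmin (min_le_right _ _)⟩)
  have hne : ∀ k t, (Sset k t).Nonempty := fun k t => ⟨0, mem_insert _ _⟩
  have hρ0 : ∀ k t, 0 ≤ ρk k t := fun k t => le_csSup (hbddA k t) (mem_insert _ _)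
  have hmem : ∀ (k n : ℕ) (t t' : ℝ), 0 ≤ t' → t' ≤ T → t' ≤ t →
      dist (X (n + k) t') (X k t') ≤ ρk k t := by
    intro k n t t' h0 hT' ht
    exact le_csSup (hbddA k t) (mem_insert_of_mem _ ⟨n, t', h0, le_min ht hT', rfl⟩)
  have hρmono : ∀ k, Monotone (ρk k) := by
    intro k a b hab
    refine csSup_le_csSup (hbddA k b) (hne k a) ?_
    intro d hd
    rcases mem_insert_iff.mp hd with rfl | ⟨n, t', h0, hmin, rfl⟩
    · exact mem_insert _ _
    · exact mem_insert_of_mem _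
        ⟨n, t', h0, le_trans hmin (min_le_min_right T hab), rfl⟩
  have hμρmeas : ∀ k, Measurable fun s => μ (ρk k s) := fun k =>
    hμ_cont.measurable.comp (hρmono k).measurable
  have hμρbd : ∀ k, ∀ s : ℝ, |μ (ρk k s)| ≤ B := fun k s => by
    rw [abs_of_nonneg (hμ_nonneg _)]; exact hB _
  have hIntR : ∀ (k k' : ℕ) (a b : ℝ),
      IntervalIntegrable (fun s => μ (ρk k s) + μ (ρk k' s)) volume a b := by
    intro k k' a b
    refine intInt_of_bdd ((hμρmeas k).add (hμρmeas k')) (Bd := B + B) (fun x => ?_) a b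
    simp only [Pi.add_apply]
    rw [abs_of_nonneg (add_nonneg (hμ_nonneg _) (hμ_nonneg _))]
    exact add_le_add (hB _) (hB _)
  -- the key integral inequality for the sup quantities
  have hkey : ∀ k, 1 ≤ k → ∀ t, 0 ≤ t → t ≤ T →
      ρk k t ≤ C * ∫ s in (0:ℝ)..t, (μ (ρk k s) + μ (ρk (k - 1) s)) := by
    intro k hk t h0t htT
    have hRHS0 : 0 ≤ ∫ s in (0:ℝ)..t, (μ (ρk k s) + μ (ρk (k - 1) s)) :=
      intervalIntegral.integral_nonneg h0t
        (fun s _ => add_nonneg (hμ_nonneg _) (hμ_nonneg _))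
    refine csSup_le (hne k t) ?_
    intro d hd
    rcases mem_insert_iff.mp hd with rfl | ⟨n, t', h0', hmin', rfl⟩
    · exact mul_nonneg hC.le hRHS0
    · rcases Nat.eq_zero_or_pos n with rfl | hn
      · rw [zero_add, dist_self]
        exact mul_nonneg hC.le hRHS0
      · have ht'T : t' ≤ T := le_trans hmin' (min_le_right _ _)
        have ht't : t' ≤ t := le_trans hmin' (min_le_left _ _)
        have h1 := hineq n hn k hk t' ⟨h0', ht'T⟩
        have hnk1 : n + k - 1 = n + (k - 1) := by omega
        have hcontI : IntervalIntegrable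
            (fun s => μ (dist (X (n + k) s) (X k s)) + μ (dist (X (n + k - 1) s) (X (k - 1) s)))
            volume 0 t' := by
          apply ContinuousOn.intervalIntegrable
          rw [uIcc_of_le h0']
          have hsub : Icc (0:ℝ) t' ⊆ Icc 0 T := Icc_subset_Icc le_rfl ht'T
          have hd1 : ContinuousOn (fun s => dist (X (n + k) s) (X k s)) (Icc 0 t') :=
            continuous_dist.comp_continuousOn (f := fun s => (X (n + k) s, X k s))
              (((hX_cont (n + k)).mono hsub).prodMk ((hX_cont k).mono hsub))
          have hd2 : ContinuousOn (fun s => dist (X (n + k - 1) s) (X (k - 1) s)) (Icc 0 t') :=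
            continuous_dist.comp_continuousOn (f := fun s => (X (n + k - 1) s, X (k - 1) s))
              (((hX_cont (n + k - 1)).mono hsub).prodMk ((hX_cont (k - 1)).mono hsub))
          exact (hμ_cont.comp_continuousOn hd1).add (hμ_cont.comp_continuousOn hd2)
        have hmono_int : (∫ s in (0:ℝ)..t',
              (μ (dist (X (n + k) s) (X k s)) + μ (dist (X (n + k - 1) s) (X (k - 1) s))))
            ≤ ∫ s in (0:ℝ)..t', (μ (ρk k s) + μ (ρk (k - 1) s)) := by
          refine intervalIntegral.integral_mono_on h0' hcontI (hIntR k (k - 1) 0 t') ?_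
          intro s hs
          refine add_le_add (hμ_mono (hmem k n s s hs.1 (hs.2.trans ht'T) le_rfl)) ?_
          refine hμ_mono ?_
          rw [hnk1]
          exact hmem (k - 1) n s s hs.1 (hs.2.trans ht'T) le_rfl
        have hext : (∫ s in (0:ℝ)..t', (μ (ρk k s) + μ (ρk (k - 1) s)))
            ≤ ∫ s in (0:ℝ)..t, (μ (ρk k s) + μ (ρk (k - 1) s)) := by
          refine intervalIntegral.integral_mono_interval le_rfl h0' ht't ?_ (hIntR k (k-1) 0 t)
          exact Filter.Eventually.of_forall fun s => add_nonneg (hμ_nonneg _) (hμ_nonneg _)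
        exact h1.trans (mul_le_mul_of_nonneg_left (hmono_int.trans hext) hC.le)
  set M : ℝ := C * ((B + B) * T) with hMdef
  have hM0 : 0 ≤ M := by positivity
  have hMall : ∀ k, 1 ≤ k → ∀ t : ℝ, ρk k t ≤ M := by
    intro k hk t
    have hρkT : ρk k T ≤ M := by
      refine (hkey k hk T hT.le le_rfl).trans ?_
      have h2 : (∫ s in (0:ℝ)..T, (μ (ρk k s) + μ (ρk (k - 1) s)))
          ≤ ∫ _ in (0:ℝ)..T, (B + B) := by
        refine intervalIntegral.integral_mono_on hT.le (hIntR k (k - 1) 0 T)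
          intervalIntegrable_const (fun s _ => add_le_add (hB _) (hB _))
      rw [intervalIntegral.integral_const, smul_eq_mul, sub_zero] at h2
      rw [hMdef]
      refine mul_le_mul_of_nonneg_left (h2.trans (le_of_eq (by ring))) hC.le
    refine csSup_le (hne k t) ?_
    intro d hd
    rcases mem_insert_iff.mp hd with rfl | ⟨n, t', h0, hmin, rfl⟩
    · exact hM0
    · exact (hmem k n T t' h0 (le_trans hmin (min_le_right _ _))
        (le_trans hmin (min_le_right _ _))).trans hρkT
  -- the limsup function
  set ρ : ℝ → ℝ := fun t => Filter.limsup (fun k => ρk k t) Filter.atTop with hρdef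
  have hbddU : ∀ t, Filter.IsBoundedUnder (· ≤ ·) Filter.atTop (fun k => ρk k t) := fun t =>
    isBoundedUnder_of_eventually_le (Filter.eventually_atTop.mpr ⟨1, fun k hk => hMall k hk t⟩)
  have hcobU : ∀ t, Filter.IsCoboundedUnder (· ≤ ·) Filter.atTop (fun k => ρk k t) := fun t =>
    Filter.isCoboundedUnder_le_of_le Filter.atTop (fun k => hρ0 k t)
  have hρnonneg : ∀ t, 0 ≤ ρ t := fun t =>
    Filter.le_limsup_of_frequently_le (Filter.Frequently.of_forall fun k => hρ0 k t) (hbddU t)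
  have hρmono' : Monotone ρ := fun a b hab =>
    Filter.limsup_le_limsup (Filter.Eventually.of_forall fun k => hρmono k hab)
      (hcobU a) (hbddU b)
  have hρmeas : Measurable fun s => μ (ρ s) := hμ_cont.measurable.comp hρmono'.measurable
  have hIntρ : ∀ a b : ℝ, IntervalIntegrable (fun s => μ (ρ s)) volume a b := fun a b =>
    intInt_of_bdd hρmeas (Bd := B)
      (fun x => by rw [abs_of_nonneg (hμ_nonneg _)]; exact hB _) a b
  -- reverse Fatou step
  have hC2 : ∀ t, 0 ≤ t → t ≤ T → ρ t ≤ 2 * C * ∫ s in (0:ℝ)..t, μ (ρ s) := by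
    intro t h0t htT
    set I : ℕ → ℝ := fun k => ∫ s in (0:ℝ)..t, (μ (ρk k s) + μ (ρk (k - 1) s)) with hIdef
    have hI0 : ∀ k, 0 ≤ I k := fun k => intervalIntegral.integral_nonneg h0t
      (fun s _ => add_nonneg (hμ_nonneg _) (hμ_nonneg _))
    set J : ℝ := ∫ s in (0:ℝ)..t, 2 * μ (ρ s) with hJdef
    have hJ0 : 0 ≤ J := intervalIntegral.integral_nonneg h0t
      (fun s _ => mul_nonneg (by norm_num) (hμ_nonneg _))
    set g : ℕ → ℝ → ℝ≥0∞ := fun k s =>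
      ENNReal.ofReal (μ (ρk k s)) + ENNReal.ofReal (μ (ρk (k - 1) s)) with hgdef
    have hgmeas : ∀ k, Measurable (g k) := fun k =>
      ((ENNReal.measurable_ofReal.comp (hμρmeas k)).add
        (ENNReal.measurable_ofReal.comp (hμρmeas (k - 1))))
    have h1 : ∀ k, ENNReal.ofReal (I k) = ∫⁻ s in Ioc (0:ℝ) t, g k s := by
      intro k
      rw [hIdef]
      simp only []
      rw [intervalIntegral.integral_of_le h0t]
      rw [MeasureTheory.ofReal_integral_eq_lintegral_ofReal
        (hIntR k (k - 1) 0 t).1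
        (Filter.Eventually.of_forall fun s => add_nonneg (hμ_nonneg _) (hμ_nonneg _))]
      exact lintegral_congr fun s => ENNReal.ofReal_add (hμ_nonneg _) (hμ_nonneg _)
    have h2 : Filter.limsup (fun k => ∫⁻ s in Ioc (0:ℝ) t, g k s) Filter.atTop
        ≤ ∫⁻ s in Ioc (0:ℝ) t, Filter.limsup (fun k => g k s) Filter.atTop := by
      refine limsup_lintegral_le (μ := volume.restrict (Ioc (0:ℝ) t))
        (fun _ => ENNReal.ofReal B + ENNReal.ofReal B) hgmeas
        (fun k => Filter.Eventually.of_forall fun s =>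
          add_le_add (ENNReal.ofReal_le_ofReal (hB _)) (ENNReal.ofReal_le_ofReal (hB _))) ?_
      rw [lintegral_const]
      exact ENNReal.mul_ne_top (by simp [ENNReal.add_ne_top]) (by simp [measure_Ioc_lt_top.ne])
    have hpt : ∀ s : ℝ, Filter.limsup (fun k => g k s) Filter.atTop
        ≤ ENNReal.ofReal (2 * μ (ρ s)) := by
      intro s
      refine ENNReal.le_of_forall_pos_le_add fun η hη _ => ?_
      have hδ0 : (0:ℝ) < (η : ℝ) / 2 := by positivity
      obtain ⟨ε, hε0, hε⟩ :=
        Metric.continuousAt_iff.mp (hμ_cont.continuousAt (x := ρ s)) ((η : ℝ) / 2) hδ0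
      have hμless : μ (ρ s + ε / 2) ≤ μ (ρ s) + (η : ℝ) / 2 := by
        have h := hε (x := ρ s + ε / 2)
          (by rw [Real.dist_eq, add_sub_cancel_left, abs_of_pos (by linarith)]; linarith)
        rw [Real.dist_eq] at h
        have := (abs_lt.mp h).2
        linarith
      have hev1 : ∀ᶠ k : ℕ in Filter.atTop, ρk k s < ρ s + ε / 2 := by
        refine Filter.eventually_lt_of_limsup_lt ?_ (hbddU s)
        have : ρ s = Filter.limsup (fun k => ρk k s) Filter.atTop := by rw [hρdef]
        rw [← this]
        linarith
      obtain ⟨N, hN⟩ := Filter.eventually_atTop.mp hev1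
      have hev : ∀ᶠ k : ℕ in Filter.atTop,
          g k s ≤ ENNReal.ofReal (2 * μ (ρ s)) + (η : ℝ≥0∞) := by
        refine Filter.eventually_atTop.mpr ⟨N + 1, fun k hk => ?_⟩
        have b1 : μ (ρk k s) ≤ μ (ρ s) + (η : ℝ) / 2 :=
          le_trans (hμ_mono (hN k (by omega)).le) hμless
        have b2 : μ (ρk (k - 1) s) ≤ μ (ρ s) + (η : ℝ) / 2 :=
          le_trans (hμ_mono (hN (k - 1) (by omega)).le) hμless
        calc g k s ≤ ENNReal.ofReal (μ (ρ s) + (η : ℝ) / 2)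
              + ENNReal.ofReal (μ (ρ s) + (η : ℝ) / 2) :=
            add_le_add (ENNReal.ofReal_le_ofReal b1) (ENNReal.ofReal_le_ofReal b2)
          _ = ENNReal.ofReal (2 * μ (ρ s) + (η : ℝ)) := by
            rw [← ENNReal.ofReal_add (add_nonneg (hμ_nonneg _) hδ0.le)
              (add_nonneg (hμ_nonneg _) hδ0.le)]
            congr 1
            ring
          _ = ENNReal.ofReal (2 * μ (ρ s)) + (η : ℝ≥0∞) := by
            rw [ENNReal.ofReal_add (mul_nonneg (by norm_num) (hμ_nonneg _)) η.coe_nonneg,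
              ENNReal.ofReal_coe_nnreal]
      exact Filter.limsup_le_of_le (by isBoundedDefault) hev
    have h3 : (∫⁻ s in Ioc (0:ℝ) t, Filter.limsup (fun k => g k s) Filter.atTop)
        ≤ ∫⁻ s in Ioc (0:ℝ) t, ENNReal.ofReal (2 * μ (ρ s)) :=
      setLIntegral_mono (ENNReal.measurable_ofReal.comp (measurable_const.mul hρmeas))
        (fun s _ => hpt s)
    have h4 : (∫⁻ s in Ioc (0:ℝ) t, ENNReal.ofReal (2 * μ (ρ s))) = ENNReal.ofReal J := by
      rw [hJdef, intervalIntegral.integral_of_le h0t,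
        MeasureTheory.ofReal_integral_eq_lintegral_ofReal
          ((hIntρ 0 t).const_mul 2).1
          (Filter.Eventually.of_forall fun s => mul_nonneg (by norm_num) (hμ_nonneg _))]
    have hlim : Filter.limsup (fun k => ENNReal.ofReal (I k)) Filter.atTop
        ≤ ENNReal.ofReal J := by
      calc Filter.limsup (fun k => ENNReal.ofReal (I k)) Filter.atTop
          = Filter.limsup (fun k => ∫⁻ s in Ioc (0:ℝ) t, g k s) Filter.atTop := by
            refine Filter.limsup_congr (Filter.Eventually.of_forall fun k => h1 k)
        _ ≤ _ := h2.trans (h3.trans_eq h4)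
    have hfinal : ∀ δ : ℝ, 0 < δ → ρ t ≤ C * (J + δ) := by
      intro δ hδ
      have hlt : Filter.limsup (fun k => ENNReal.ofReal (I k)) Filter.atTop
          < ENNReal.ofReal (J + δ) := by
        refine lt_of_le_of_lt hlim ?_
        rw [ENNReal.ofReal_lt_ofReal_iff (by linarith)]
        linarith
      have hevI : ∀ᶠ k : ℕ in Filter.atTop, I k < J + δ := by
        filter_upwards [Filter.eventually_lt_of_limsup_lt hlt] with k hk
        exact (ENNReal.ofReal_lt_ofReal_iff_of_nonneg (hI0 k)).mp hk
      have hevR : ∀ᶠ k : ℕ in Filter.atTop, ρk k t ≤ C * (J + δ) := by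
        filter_upwards [hevI, Filter.eventually_ge_atTop 1] with k hk hk1
        exact (hkey k hk1 t h0t htT).trans
          (mul_le_mul_of_nonneg_left hk.le hC.le)
      exact Filter.limsup_le_of_le (hcobU t) hevR
    have : ρ t ≤ C * J := by
      have h := fun δ (hδ : 0 < δ) => hfinal δ hδ
      refine le_of_forall_pos_le_add fun δ hδ => ?_
      have := h (δ / C) (by positivity)
      calc ρ t ≤ C * (J + δ / C) := this
        _ = C * J + δ := by field_simp
    refine this.trans (le_of_eq ?_)
    rw [hJdef, intervalIntegral.integral_const_mul]
    ring
  -- apply the Osgood core lemma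
  set ψ : ℝ → ℝ := fun u => 2 * C * ∫ s in (0:ℝ)..u, μ (ρ s) with hψdef
  have hψcont : Continuous ψ :=
    continuous_const.mul (intervalIntegral.continuous_primitive hIntρ 0)
  have hψ0 : ψ 0 = 0 := by
    rw [hψdef]; simp
  have hψnn : ∀ u, 0 ≤ u → 0 ≤ ψ u := fun u hu =>
    mul_nonneg (by positivity)
      (intervalIntegral.integral_nonneg hu fun s _ => hμ_nonneg _)
  have hρleψ : ∀ u, 0 ≤ u → u ≤ T → ρ u ≤ ψ u := fun u h0u huT => hC2 u h0u huT
  have hdiffψ : ∀ s u, 0 ≤ s → s ≤ u → u ≤ T → ψ u - ψ s ≤ 2 * C * (u - s) * μ (ψ u) := by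
    intro s u h0s hsu huT
    have h1 : ψ u - ψ s = 2 * C * ∫ r in s..u, μ (ρ r) := by
      rw [hψdef]
      simp only []
      rw [← mul_sub, intervalIntegral.integral_interval_sub_left (hIntρ 0 u) (hIntρ 0 s)]
    have h2 : (∫ r in s..u, μ (ρ r)) ≤ (u - s) * μ (ρ u) := by
      have := intervalIntegral.integral_mono_on hsu (hIntρ s u)
        (intervalIntegrable_const (c := μ (ρ u)))
        (fun r hr => hμ_mono (hρmono' hr.2))
      rwa [intervalIntegral.integral_const, smul_eq_mul] at this
    have h3 : μ (ρ u) ≤ μ (ψ u) := hμ_mono (hρleψ u (h0s.trans hsu) huT)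
    calc ψ u - ψ s = 2 * C * ∫ r in s..u, μ (ρ r) := h1
      _ ≤ 2 * C * ((u - s) * μ (ρ u)) := by
          refine mul_le_mul_of_nonneg_left h2 (by positivity)
      _ ≤ 2 * C * ((u - s) * μ (ψ u)) := by
          refine mul_le_mul_of_nonneg_left
            (mul_le_mul_of_nonneg_left h3 (by linarith)) (by positivity)
      _ = 2 * C * (u - s) * μ (ψ u) := by ring
  have hosgood := osgood_core μ hμ_nonneg hμ_mono hμ_osgood (2 * C) T (by linarith)
    ψ hψcont hψ0 hψnn hdiffψ
  have hρT : ρ T = 0 :=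
    le_antisymm ((hρleψ T hT.le le_rfl).trans (hosgood T hT.le le_rfl)) (hρnonneg T)
  intro ε hε
  have hlt : Filter.limsup (fun k => ρk k T) Filter.atTop < ε := by
    have : ρ T = Filter.limsup (fun k => ρk k T) Filter.atTop := by rw [hρdef]
    rw [← this, hρT]
    exact hε
  obtain ⟨N, hN⟩ := Filter.eventually_atTop.mp
    (Filter.eventually_lt_of_limsup_lt hlt (hbddU T))
  refine ⟨N, fun k hk n t ht => ?_⟩
  exact lt_of_le_of_lt (hmem k n T t ht.1 ht.2 ht.2) (hN k hk)
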